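/- A permutation π ∈ S_{n+1} is boolean if and only if #( {π(1),…,π(i)} ∩ {1,…,i} ) ≥ i − 1 for every i with 1 ≤ i ≤ n. -/

import Mathlib

/-!
Write `escapeCount π i` for the number of `x < i` with `π x ≥ i`; the condition of the theorem
says exactly that this is at most one for every cut `i`. A letter `s_a` can only change what
crosses the cut `i = a + 1`.

A boolean word `l c l⁻¹` multiplies to the transposition of `P = l(c)` and `Q = l(c + 1)`, and
since a transposition of points at distance `d` has a word of length `2d - 1`, reducedness forces
`Q - P = |l| + 1`: every letter of `l`, read from the inside out, pushes `P` down or `Q` up by one.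
So the outermost letter `a` lies strictly on one side of all the inner letters, and a subword is
`e₁ B e₂` with `e₁, e₂ ⊆ {s_a}` and `B` a product of inner letters; `B` fixes `a` or `a + 1` and
does not move anything across the cut `a + 1`, which leaves at most one crossing there.

Conversely, multiplying `π` by `s_0` on the left and/or right makes it fix `0` without changing
the crossings at cuts `i ≥ 2`, so induction on `n` writes `π` as a subword of
`s_0 s_1 ⋯ s_{n-1} ⋯ s_1 s_0`. That word is reduced because the transposition `(0 n)` has
`2n - 1` inversions.
-/

/-- The `i`-th adjacent transposition `s_{i+1}` (1-indexed `s_1, …, s_n`) in the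
symmetric group `S_{n+1}`, realized as permutations of `Fin (n+1)`. -/
def adjTransposition (n : ℕ) (i : Fin n) : Equiv.Perm (Fin (n + 1)) :=
  Equiv.swap i.castSucc i.succ

/-- The product of a word in the adjacent transpositions. -/
def wordProdA (n : ℕ) (w : List (Fin n)) : Equiv.Perm (Fin (n + 1)) :=
  (w.map (adjTransposition n)).prod

/-- A word in the generators is reduced if no shorter word has the same product. -/
def ReducedA (n : ℕ) (w : List (Fin n)) : Prop :=
  ∀ w' : List (Fin n), wordProdA n w' = wordProdA n w → w.length ≤ w'.length

/-- An element is a boolean reflection if it admits a reduced expression of the form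
`s_{j_1} ⋯ s_{j_{k-1}} s_{j_k} s_{j_{k-1}} ⋯ s_{j_1}` with `j_1, …, j_k` pairwise distinct. -/
def IsBooleanReflectionA (n : ℕ) (t : Equiv.Perm (Fin (n + 1))) : Prop :=
  ∃ (l : List (Fin n)) (c : Fin n), (l ++ [c]).Nodup ∧
    ReducedA n (l ++ [c] ++ l.reverse) ∧ wordProdA n (l ++ [c] ++ l.reverse) = t

/-- A permutation is boolean if it is the product of some subsequence of a
boolean expression. -/
def IsBooleanA (n : ℕ) (π : Equiv.Perm (Fin (n + 1))) : Prop :=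
  ∃ (l : List (Fin n)) (c : Fin n), (l ++ [c]).Nodup ∧
    ReducedA n (l ++ [c] ++ l.reverse) ∧
    ∃ w : List (Fin n), w.Sublist (l ++ [c] ++ l.reverse) ∧ wordProdA n w = π

/-- The top boolean word `s_1 s_2 ⋯ s_{n-1} s_n s_{n-1} ⋯ s_2 s_1`. -/
def topWordA (n : ℕ) : List (Fin n) :=
  List.finRange n ++ ((List.finRange n).dropLast).reverse

open Finset

variable {n : ℕ}

@[simp] lemma wordProdA_nil : wordProdA n [] = 1 := rfl

@[simp] lemma wordProdA_cons (a : Fin n) (w : List (Fin n)) :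
    wordProdA n (a :: w) = adjTransposition n a * wordProdA n w := by
  simp [wordProdA]

@[simp] lemma wordProdA_append (v w : List (Fin n)) :
    wordProdA n (v ++ w) = wordProdA n v * wordProdA n w := by
  simp [wordProdA]

@[simp] lemma wordProdA_singleton (a : Fin n) : wordProdA n [a] = adjTransposition n a := by
  simp [wordProdA]

@[simp] lemma adjTransposition_mul_self (a : Fin n) :
    adjTransposition n a * adjTransposition n a = 1 := by
  simp [adjTransposition]

lemma wordProdA_reverse (w : List (Fin n)) :
    wordProdA n w.reverse = (wordProdA n w)⁻¹ := by
  induction w with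
  | nil => simp
  | cons a w ih => simp [ih, adjTransposition]

lemma adjTransposition_apply_val (a : Fin n) (x : Fin (n + 1)) :
    (adjTransposition n a x).val =
      if x.val = a.val then a.val + 1 else if x.val = a.val + 1 then a.val else x.val := by
  unfold adjTransposition
  rcases eq_or_ne x a.castSucc with rfl | h
  · simp
  rcases eq_or_ne x a.succ with rfl | h'
  · simp
  rw [Equiv.swap_apply_of_ne_of_ne h h', if_neg (by simpa [Fin.ext_iff] using h),
    if_neg (by simpa [Fin.ext_iff] using h')]

lemma wordProdA_apply_val_lt_iff {w : List (Fin n)} {i : ℕ} (hw : ∀ a ∈ w, a.val + 1 ≠ i)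
    (x : Fin (n + 1)) : (wordProdA n w x).val < i ↔ x.val < i := by
  induction w with
  | nil => simp
  | cons a w ih =>
    have ha := hw a (by simp)
    rw [wordProdA_cons, Equiv.Perm.mul_apply, adjTransposition_apply_val,
      ← ih fun b hb => hw b (by simp [hb])]
    split_ifs <;> omega

lemma wordProdA_apply_eq_self {w : List (Fin n)} {x : Fin (n + 1)}
    (hw : ∀ a ∈ w, a.val ≠ x.val ∧ a.val + 1 ≠ x.val) : wordProdA n w x = x := by
  induction w with
  | nil => simp
  | cons a w ih =>
    have ha := hw a (by simp)
    rw [wordProdA_cons, Equiv.Perm.mul_apply, ih fun b hb => hw b (by simp [hb]), Fin.ext_iff,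
      adjTransposition_apply_val]
    split_ifs <;> omega

def escapeCount (π : Equiv.Perm (Fin (n + 1))) (i : ℕ) : ℕ :=
  (univ.filter fun x : Fin (n + 1) => x.val < i ∧ i ≤ (π x).val).card

lemma escapeCount_one (i : ℕ) : escapeCount (1 : Equiv.Perm (Fin (n + 1))) i = 0 := by
  rw [escapeCount, card_eq_zero, filter_eq_empty_iff]
  intro x _
  rw [Equiv.Perm.one_apply]
  omega

lemma escapeCount_mul_left {A : Equiv.Perm (Fin (n + 1))} {i : ℕ}
    (hA : ∀ x, (A x).val < i ↔ x.val < i) (σ : Equiv.Perm (Fin (n + 1))) :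
    escapeCount (A * σ) i = escapeCount σ i := by
  unfold escapeCount
  congr 1
  refine filter_congr fun x _ => ?_
  rw [Equiv.Perm.mul_apply, ← not_lt, ← not_lt, hA]

lemma escapeCount_mul_right {A : Equiv.Perm (Fin (n + 1))} {i : ℕ}
    (hA : ∀ x, (A x).val < i ↔ x.val < i) (σ : Equiv.Perm (Fin (n + 1))) :
    escapeCount (σ * A) i = escapeCount σ i := by
  refine card_bij (fun x _ => A x) (fun x hx => ?_) (fun _ _ _ _ h => A.injective h)
    (fun y hy => ⟨A.symm y, ?_, A.apply_symm_apply y⟩)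
  · simp only [mem_filter, mem_univ, true_and] at hx ⊢
    exact ⟨(hA x).2 hx.1, hx.2⟩
  · simp only [mem_filter, mem_univ, true_and] at hy ⊢
    rw [Equiv.Perm.mul_apply, Equiv.apply_symm_apply, ← hA, Equiv.apply_symm_apply]
    exact hy

lemma escapeCount_le_one_of_forall_eq {π : Equiv.Perm (Fin (n + 1))} {i : ℕ} (z : Fin (n + 1))
    (hz : ∀ x : Fin (n + 1), x.val < i → i ≤ (π x).val → x = z) : escapeCount π i ≤ 1 := by
  refine card_le_one.2 fun a ha b hb => ?_
  simp only [mem_filter, mem_univ, true_and] at ha hb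
  rw [hz a ha.1 ha.2, hz b hb.1 hb.2]

lemma le_card_image_inter_iff (π : Equiv.Perm (Fin (n + 1))) {i : ℕ} (hi : i ≤ n + 1) :
    i - 1 ≤ ((univ.filter (fun x : Fin (n + 1) => x.val < i)).image (fun x => π x) ∩
      univ.filter (fun x : Fin (n + 1) => x.val < i)).card ↔ escapeCount π i ≤ 1 := by
  set S := univ.filter (fun x : Fin (n + 1) => x.val < i)
  have hS : #S = i := by rw [Fin.card_filter_val_lt, min_eq_right hi]
  have himage : #(S.image fun x => π x) = i := by rw [card_image_of_injective _ π.injective, hS]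
  have hesc : escapeCount π i = #((S.image fun x => π x) \ S) := by
    rw [escapeCount, ← card_image_of_injective _ π.injective]
    congr 1
    ext y
    obtain ⟨x, rfl⟩ := π.surjective y
    simp only [S, mem_sdiff, mem_image, mem_filter, mem_univ, true_and,
      EmbeddingLike.apply_eq_iff_eq, exists_eq_right, not_lt]
  have := card_sdiff_add_card_inter (S.image fun x => π x) S
  omega

lemma dist_adjTransposition_apply_le (a : Fin n) (x y : Fin (n + 1)) :
    Nat.dist (adjTransposition n a x).val (adjTransposition n a y).val ≤
      Nat.dist x.val y.val + 1 := by
  rw [adjTransposition_apply_val, adjTransposition_apply_val]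
  unfold Nat.dist
  split_ifs <;> omega

lemma dist_wordProdA_apply_le (w : List (Fin n)) (x y : Fin (n + 1)) :
    Nat.dist (wordProdA n w x).val (wordProdA n w y).val ≤ Nat.dist x.val y.val + w.length := by
  induction w with
  | nil => simp
  | cons a w ih =>
    have := dist_adjTransposition_apply_le a (wordProdA n w x) (wordProdA n w y)
    simp only [wordProdA_cons, Equiv.Perm.mul_apply, List.length_cons]
    omega

lemma adjTransposition_stretch_cases {a : Fin n} {x y : Fin (n + 1)} (hxy : x.val < y.val)
    (h : Nat.dist x.val y.val + 1 ≤
      Nat.dist (adjTransposition n a x).val (adjTransposition n a y).val) :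
    (a.val + 1 = x.val ∧ (adjTransposition n a x).val = a.val ∧
        (adjTransposition n a y).val = y.val) ∨
      (a.val = y.val ∧ (adjTransposition n a x).val = x.val ∧
        (adjTransposition n a y).val = a.val + 1) := by
  rw [adjTransposition_apply_val, adjTransposition_apply_val] at h ⊢
  unfold Nat.dist at h
  split_ifs at h ⊢ <;> omega

lemma exists_wordProdA_eq_swap {x y : Fin (n + 1)} (hxy : x ≠ y) :
    ∃ u : List (Fin n), u.length + 1 = 2 * Nat.dist x.val y.val ∧
      wordProdA n u = Equiv.swap x y := by
  wlog hlt : x < y generalizing x y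
  · obtain ⟨u, hu, hprod⟩ := this hxy.symm (lt_of_le_of_ne (not_lt.1 hlt) hxy.symm)
    exact ⟨u, by rwa [Nat.dist_comm], by rw [hprod, Equiv.swap_comm]⟩
  rw [Fin.lt_def] at hlt
  obtain ⟨k, hk⟩ : ∃ k, y.val = x.val + k + 1 := ⟨y.val - x.val - 1, by omega⟩
  rw [show Nat.dist x.val y.val = k + 1 by unfold Nat.dist; omega]
  clear hxy hlt
  induction k generalizing y with
  | zero =>
    refine ⟨[⟨x.val, by omega⟩], rfl, ?_⟩
    rw [wordProdA_singleton, adjTransposition]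
    congr
    exact Fin.ext hk.symm
  | succ k ih =>
    set j : Fin n := ⟨y.val - 1, by omega⟩
    obtain ⟨u, hu, hprod⟩ := ih (y := j.castSucc) (show y.val - 1 = x.val + k + 1 by omega)
    refine ⟨j :: u ++ [j], ?_, ?_⟩
    · simp only [List.length_append, List.length_cons, List.length_nil]
      omega
    have hx : adjTransposition n j x = x := Equiv.swap_apply_of_ne_of_ne
      (Fin.ne_of_val_ne (show x.val ≠ y.val - 1 by omega))
      (Fin.ne_of_val_ne (show x.val ≠ y.val - 1 + 1 by omega))
    have hy : adjTransposition n j j.castSucc = y := by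
      rw [adjTransposition, Equiv.swap_apply_left]
      exact Fin.ext (show y.val - 1 + 1 = y.val by omega)
    have hconj := Equiv.swap_apply_apply (adjTransposition n j) x j.castSucc
    rw [hx, hy] at hconj
    rw [wordProdA_append, wordProdA_cons, wordProdA_singleton, hprod, hconj, adjTransposition,
      Equiv.swap_inv]

lemma dist_val_castSucc_succ (c : Fin n) : Nat.dist c.castSucc.val c.succ.val = 1 := by
  simp [Nat.dist]

-- `l` pulls the adjacent points `c`, `c + 1` as far apart as any word of its length can.
def Stretched (l : List (Fin n)) (c : Fin n) : Prop :=
  Nat.dist (wordProdA n l c.castSucc).val (wordProdA n l c.succ).val = l.length + 1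

lemma stretched_of_reducedA {l : List (Fin n)} {c : Fin n}
    (h : ReducedA n (l ++ [c] ++ l.reverse)) : Stretched l c := by
  have hprod : wordProdA n (l ++ [c] ++ l.reverse) =
      Equiv.swap (wordProdA n l c.castSucc) (wordProdA n l c.succ) := by
    rw [wordProdA_append, wordProdA_append, wordProdA_reverse, wordProdA_singleton,
      Equiv.swap_apply_apply]
    rfl
  have hPQ : wordProdA n l c.castSucc ≠ wordProdA n l c.succ := fun h => by
    simpa [Fin.ext_iff] using (wordProdA n l).injective h
  obtain ⟨u, hu, hu_prod⟩ := exists_wordProdA_eq_swap hPQ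
  have hlen := h u (hu_prod.trans hprod.symm)
  have hle := dist_wordProdA_apply_le l c.castSucc c.succ
  simp only [List.length_append, List.length_singleton, List.length_reverse] at hlen
  rw [dist_val_castSucc_succ] at hle
  unfold Stretched
  omega

lemma Stretched.of_cons {a : Fin n} {l : List (Fin n)} {c : Fin n} (h : Stretched (a :: l) c) :
    Stretched l c ∧
      Nat.dist (wordProdA n l c.castSucc).val (wordProdA n l c.succ).val + 1 ≤
        Nat.dist (adjTransposition n a (wordProdA n l c.castSucc)).val
          (adjTransposition n a (wordProdA n l c.succ)).val := by
  have hle := dist_wordProdA_apply_le l c.castSucc c.succ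
  have hstep := dist_adjTransposition_apply_le a (wordProdA n l c.castSucc) (wordProdA n l c.succ)
  simp only [Stretched, wordProdA_cons, Equiv.Perm.mul_apply, List.length_cons] at h ⊢
  rw [dist_val_castSucc_succ] at hle
  omega

lemma Stretched.bounds {l : List (Fin n)} {c : Fin n} (h : Stretched l c) :
    (wordProdA n l c.castSucc).val < (wordProdA n l c.succ).val ∧
      ∀ b ∈ l ++ [c], (wordProdA n l c.castSucc).val ≤ b.val ∧
        b.val < (wordProdA n l c.succ).val := by
  induction l with
  | nil => simp
  | cons a l ih =>
    obtain ⟨hl, hstretch⟩ := h.of_cons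
    obtain ⟨hlt, hmem⟩ := ih hl
    simp only [wordProdA_cons, Equiv.Perm.mul_apply, List.cons_append, List.mem_cons]
    rcases adjTransposition_stretch_cases hlt hstretch with ⟨ha, hP, hQ⟩ | ⟨ha, hP, hQ⟩ <;>
    · rw [hP, hQ]
      refine ⟨by omega, ?_⟩
      rintro b (rfl | hb)
      · omega
      · have := hmem b hb
        omega

lemma Stretched.lt_or_gt_of_cons {a : Fin n} {l : List (Fin n)} {c : Fin n}
    (h : Stretched (a :: l) c) : (∀ b ∈ l ++ [c], a < b) ∨ (∀ b ∈ l ++ [c], b < a) := by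
  obtain ⟨hl, hstretch⟩ := h.of_cons
  obtain ⟨hlt, hmem⟩ := hl.bounds
  rcases adjTransposition_stretch_cases hlt hstretch with ⟨ha, -⟩ | ⟨ha, -⟩
  · exact Or.inl fun b hb => by have := hmem b hb; rw [Fin.lt_def]; omega
  · exact Or.inr fun b hb => by have := hmem b hb; rw [Fin.lt_def]; omega

lemma escapeCount_adjTransposition_le_one (a : Fin n) (i : ℕ) :
    escapeCount (adjTransposition n a) i ≤ 1 := by
  refine escapeCount_le_one_of_forall_eq a.castSucc fun x hx hesc => Fin.ext ?_
  rw [adjTransposition_apply_val] at hesc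
  simp only [Fin.val_castSucc]
  split_ifs at hesc <;> omega

lemma adjTransposition_apply_of_val_lt {a : Fin n} {x : Fin (n + 1)} (hx : x.val < a.val) :
    adjTransposition n a x = x := by
  ext
  rw [adjTransposition_apply_val]
  split_ifs <;> omega

lemma escapeCount_adj_mul_mul_adj_le_one {a : Fin n} {B : Equiv.Perm (Fin (n + 1))}
    (hB : ∀ x, (B x).val < a.val + 1 ↔ x.val < a.val + 1)
    (hfix : B a.castSucc = a.castSucc ∨ B a.succ = a.succ) :
    escapeCount (adjTransposition n a * B * adjTransposition n a) (a.val + 1) ≤ 1 := by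
  have hBlt : ∀ x, x.val < a.val + 1 → B x ≠ a.castSucc → (B x).val < a.val := fun x hx hne => by
    have := (hB x).2 hx
    rw [Ne, Fin.ext_iff, Fin.val_castSucc] at hne
    omega
  rcases hfix with hfix | hfix
  · refine escapeCount_le_one_of_forall_eq a.castSucc fun x hx hesc => ?_
    by_contra hne
    have hxa : x.val < a.val := by
      rw [Fin.ext_iff, Fin.val_castSucc] at hne
      omega
    have hBx := hBlt x hx fun h => hne (B.injective (h.trans hfix.symm))
    rw [Equiv.Perm.mul_apply, Equiv.Perm.mul_apply, adjTransposition_apply_of_val_lt hxa,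
      adjTransposition_apply_of_val_lt hBx] at hesc
    omega
  · refine escapeCount_le_one_of_forall_eq (B⁻¹ a.castSucc) fun x hx hesc => ?_
    rw [Equiv.Perm.mul_apply, Equiv.Perm.mul_apply] at hesc
    rcases Nat.lt_or_ge x.val a.val with hxa | hxa
    · rw [adjTransposition_apply_of_val_lt hxa] at hesc
      by_contra hne
      have hBx := hBlt x hx fun h => hne (by rw [← h]; simp)
      rw [adjTransposition_apply_of_val_lt hBx] at hesc
      omega
    · have : x = a.castSucc := Fin.ext (by rw [Fin.val_castSucc]; omega)
      subst this
      rw [adjTransposition, Equiv.swap_apply_left, ← adjTransposition, hfix,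
        adjTransposition_apply_val] at hesc
      simp at hesc

lemma escapeCount_mul_mul_le_one {a : Fin n} {B : Equiv.Perm (Fin (n + 1))}
    (hB : ∀ x, (B x).val < a.val + 1 ↔ x.val < a.val + 1)
    (hfix : B a.castSucc = a.castSucc ∨ B a.succ = a.succ) {e₁ e₂ : List (Fin n)}
    (he₁ : e₁.Sublist [a]) (he₂ : e₂.Sublist [a]) :
    escapeCount (wordProdA n e₁ * B * wordProdA n e₂) (a.val + 1) ≤ 1 := by
  rcases List.sublist_singleton.1 he₁ with rfl | rfl <;>
    rcases List.sublist_singleton.1 he₂ with rfl | rfl <;>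
    simp only [wordProdA_nil, wordProdA_singleton, one_mul, mul_one]
  · rw [← mul_one B, escapeCount_mul_left hB, escapeCount_one]
    exact zero_le_one
  · rw [escapeCount_mul_left hB]
    exact escapeCount_adjTransposition_le_one a _
  · rw [escapeCount_mul_right hB]
    exact escapeCount_adjTransposition_le_one a _
  · exact escapeCount_adj_mul_mul_adj_le_one hB hfix

lemma escapeCount_le_one_of_sublist {l : List (Fin n)} {c : Fin n} (hl : Stretched l c)
    {w : List (Fin n)} (hw : w.Sublist (l ++ [c] ++ l.reverse)) (i : ℕ) :
    escapeCount (wordProdA n w) i ≤ 1 := by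
  induction l generalizing w with
  | nil =>
    rcases List.sublist_singleton.1 (by simpa using hw) with rfl | rfl
    · simp [escapeCount_one]
    · simpa using escapeCount_adjTransposition_le_one c i
  | cons a l ih =>
    rw [show a :: l ++ [c] ++ (a :: l).reverse = [a] ++ (l ++ [c] ++ l.reverse) ++ [a] by simp]
      at hw
    obtain ⟨v, e₂, rfl, hv, he₂⟩ := List.sublist_append_iff.1 hw
    obtain ⟨e₁, w', rfl, he₁, hw'⟩ := List.sublist_append_iff.1 hv
    have hmem : ∀ b ∈ w', b ∈ l ++ [c] := fun b hb => by
      have := hw'.subset hb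
      simp only [List.mem_append, List.mem_reverse] at this ⊢
      tauto
    have hpreserve {e : List (Fin n)} (he : e.Sublist [a]) {j : ℕ} (hj : a.val + 1 ≠ j) :
        ∀ x, (wordProdA n e x).val < j ↔ x.val < j :=
      wordProdA_apply_val_lt_iff fun b hb => by rwa [List.mem_singleton.1 (he.subset hb)]
    rw [wordProdA_append, wordProdA_append]
    by_cases hi : a.val + 1 = i
    · subst hi
      rcases hl.lt_or_gt_of_cons with hside | hside
      · refine escapeCount_mul_mul_le_one (wordProdA_apply_val_lt_iff fun b hb => ?_)
          (Or.inl (wordProdA_apply_eq_self fun b hb => ?_)) he₁ he₂ <;>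
        · have := hside b (hmem b hb)
          simp only [Fin.lt_def, Fin.val_castSucc] at this ⊢
          omega
      · refine escapeCount_mul_mul_le_one (wordProdA_apply_val_lt_iff fun b hb => ?_)
          (Or.inr (wordProdA_apply_eq_self fun b hb => ?_)) he₁ he₂ <;>
        · have := hside b (hmem b hb)
          simp only [Fin.lt_def, Fin.val_succ] at this ⊢
          omega
    · rw [escapeCount_mul_right (hpreserve he₂ hi), escapeCount_mul_left (hpreserve he₁ hi)]
      exact ih hl.of_cons.1 hw'

lemma IsBooleanA.escapeCount_le_one {π : Equiv.Perm (Fin (n + 1))} (h : IsBooleanA n π)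
    (i : ℕ) : escapeCount π i ≤ 1 := by
  obtain ⟨l, c, -, hred, w, hw, rfl⟩ := h
  exact escapeCount_le_one_of_sublist (stretched_of_reducedA hred) hw i

def inversions (π : Equiv.Perm (Fin (n + 1))) : Finset (Fin (n + 1) × Fin (n + 1)) :=
  univ.filter fun p => p.1 < p.2 ∧ π p.2 < π p.1

lemma adjTransposition_lt_adjTransposition {j : Fin n} {x y : Fin (n + 1)} (hxy : x < y)
    (hne : ¬(x = j.castSucc ∧ y = j.succ)) : adjTransposition n j x < adjTransposition n j y := by
  simp only [Fin.lt_def, Fin.ext_iff, Fin.val_castSucc, Fin.val_succ] at hxy hne ⊢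
  rw [adjTransposition_apply_val, adjTransposition_apply_val]
  split_ifs <;> omega

lemma card_inversions_mul_adjTransposition_le (π : Equiv.Perm (Fin (n + 1))) (j : Fin n) :
    #(inversions (π * adjTransposition n j)) ≤ #(inversions π) + 1 := by
  set s := adjTransposition n j
  have hsub : inversions (π * s) ⊆
      insert (j.castSucc, j.succ) ((inversions π).image (Prod.map s s)) := by
    rintro ⟨x, y⟩ hp
    simp only [inversions, mem_filter, mem_univ, true_and] at hp
    rw [mem_insert, mem_image]
    by_cases hxy : x = j.castSucc ∧ y = j.succ
    · exact Or.inl (Prod.ext hxy.1 hxy.2)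
    · refine Or.inr ⟨(s x, s y), ?_, by simp [s, adjTransposition]⟩
      simp only [inversions, mem_filter, mem_univ, true_and]
      exact ⟨adjTransposition_lt_adjTransposition hp.1 hxy, hp.2⟩
  calc #(inversions (π * s))
      ≤ #(insert (j.castSucc, j.succ) ((inversions π).image (Prod.map s s))) := card_le_card hsub
    _ ≤ #((inversions π).image (Prod.map s s)) + 1 := card_insert_le _ _
    _ ≤ #(inversions π) + 1 := Nat.add_le_add_right card_image_le 1

lemma card_inversions_wordProdA_le (w : List (Fin n)) :
    #(inversions (wordProdA n w)) ≤ w.length := by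
  induction w using List.reverseRecOn with
  | nil =>
    rw [wordProdA_nil, List.length_nil, Nat.le_zero, inversions, card_eq_zero,
      filter_eq_empty_iff]
    exact fun p _ h => lt_asymm h.1 h.2
  | append_singleton w a ih =>
    have := card_inversions_mul_adjTransposition_le (wordProdA n w) a
    rw [wordProdA_append, wordProdA_singleton, List.length_append, List.length_singleton]
    omega

lemma card_inversions_swap_zero_last : 2 * n - 1 ≤ #(inversions (Equiv.swap 0 (Fin.last n))) := by
  set A := (univ.erase (0 : Fin (n + 1))).image fun k => ((0 : Fin (n + 1)), k)
  set B := ((univ.erase (0 : Fin (n + 1))).erase (Fin.last n)).image fun k => (k, Fin.last n)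
  have hA : #A = n := by
    rw [card_image_of_injective _ (Prod.mk_right_injective _), card_erase_of_mem (mem_univ _),
      card_univ, Fintype.card_fin, Nat.add_sub_cancel]
  have hB : n - 1 ≤ #B := by
    have := pred_card_le_card_erase (s := univ.erase (0 : Fin (n + 1))) (a := Fin.last n)
    rw [card_erase_of_mem (mem_univ _), card_univ, Fintype.card_fin] at this
    rwa [card_image_of_injective _ (Prod.mk_left_injective _)]
  have hdisj : Disjoint A B := by
    simp only [A, B, disjoint_left, mem_image, mem_erase, mem_univ, and_true]
    rintro _ ⟨k, -, rfl⟩ ⟨k', ⟨-, hk'⟩, h⟩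
    exact hk' (congrArg Prod.fst h)
  have hsub : A ∪ B ⊆ inversions (Equiv.swap 0 (Fin.last n)) := by
    refine union_subset (fun p hp => ?_) (fun p hp => ?_) <;>
      refine mem_filter.2 ⟨mem_univ _, ?_⟩
    · obtain ⟨k, hk, rfl⟩ := mem_image.1 hp
      have hk0 : k ≠ 0 := (mem_erase.1 hk).1
      rw [Equiv.swap_apply_left]
      refine ⟨Fin.pos_iff_ne_zero.2 hk0, ?_⟩
      by_cases hkl : k = Fin.last n
      · rw [hkl, Equiv.swap_apply_right, Fin.pos_iff_ne_zero]
        exact hkl ▸ hk0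
      · rwa [Equiv.swap_apply_of_ne_of_ne hk0 hkl, Fin.lt_last_iff_ne_last]
    · obtain ⟨k, hk, rfl⟩ := mem_image.1 hp
      obtain ⟨hkl, hk0⟩ : k ≠ Fin.last n ∧ k ≠ 0 := by simpa using hk
      rw [Equiv.swap_apply_right, Equiv.swap_apply_of_ne_of_ne hk0 hkl]
      exact ⟨Fin.lt_last_iff_ne_last.2 hkl, Fin.pos_iff_ne_zero.2 hk0⟩
  have := card_le_card hsub
  rw [card_union_of_disjoint hdisj] at this
  omega

def succPerm {m : ℕ} (σ : Equiv.Perm (Fin (m + 1))) : Equiv.Perm (Fin (m + 2)) :=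
  Equiv.Perm.decomposeFin.symm (0, σ)

@[simp] lemma succPerm_apply_zero {m : ℕ} (σ : Equiv.Perm (Fin (m + 1))) : succPerm σ 0 = 0 :=
  Equiv.Perm.decomposeFin_symm_apply_zero 0 σ

@[simp] lemma succPerm_apply_succ {m : ℕ} (σ : Equiv.Perm (Fin (m + 1))) (x : Fin (m + 1)) :
    succPerm σ x.succ = (σ x).succ := by
  rw [succPerm, Equiv.Perm.decomposeFin_symm_apply_succ, Equiv.swap_self, Equiv.refl_apply]

lemma exists_succPerm_eq {m : ℕ} {π : Equiv.Perm (Fin (m + 2))} (h : π 0 = 0) :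
    ∃ σ, succPerm σ = π := by
  have hπ := Equiv.Perm.decomposeFin.symm_apply_apply π
  generalize Equiv.Perm.decomposeFin π = q at hπ
  obtain ⟨p, σ⟩ := q
  have hp : p = 0 := by rw [← h, ← hπ, Equiv.Perm.decomposeFin_symm_apply_zero]
  exact ⟨σ, by rw [succPerm, ← hp, hπ]⟩

lemma wordProdA_map_succ {m : ℕ} (w : List (Fin m)) :
    wordProdA (m + 1) (w.map Fin.succ) = succPerm (wordProdA m w) := by
  ext x : 1
  induction w generalizing x with
  | nil => cases x using Fin.cases <;> simp
  | cons a w ih =>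
    rw [List.map_cons, wordProdA_cons, Equiv.Perm.mul_apply, ih]
    cases x using Fin.cases with
    | zero =>
      simp only [succPerm_apply_zero, adjTransposition]
      exact Equiv.swap_apply_of_ne_of_ne (by simp [Fin.ext_iff]) (Fin.succ_ne_zero _).symm
    | succ x =>
      rw [succPerm_apply_succ, succPerm_apply_succ, wordProdA_cons, Equiv.Perm.mul_apply,
        adjTransposition, adjTransposition, ← Fin.succ_castSucc,
        (Fin.succ_injective _).swap_apply]

lemma escapeCount_succPerm {m : ℕ} (σ : Equiv.Perm (Fin (m + 1))) (i : ℕ) :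
    escapeCount (succPerm σ) (i + 1) = escapeCount σ i := by
  symm
  rw [escapeCount, escapeCount, ← card_map (Fin.succEmb _)]
  congr 1
  ext y
  cases y using Fin.cases <;> simp

lemma succPerm_swap {m : ℕ} (a b : Fin (m + 1)) :
    succPerm (Equiv.swap a b) = Equiv.swap a.succ b.succ := by
  ext x : 1
  cases x using Fin.cases with
  | zero =>
    rw [succPerm_apply_zero]
    exact (Equiv.swap_apply_of_ne_of_ne (Fin.succ_ne_zero a).symm (Fin.succ_ne_zero b).symm).symm
  | succ y => rw [succPerm_apply_succ, (Fin.succ_injective _).swap_apply]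

lemma topWordA_succ_succ (m : ℕ) :
    topWordA (m + 2) = 0 :: (topWordA (m + 1)).map Fin.succ ++ [0] := by
  have hne : (List.finRange (m + 1)).map Fin.succ ≠ [] := by simp
  rw [topWordA, topWordA, List.finRange_succ, List.dropLast_cons_of_ne_nil hne,
    ← List.map_dropLast]
  simp

lemma wordProdA_topWordA (m : ℕ) :
    wordProdA (m + 1) (topWordA (m + 1)) = Equiv.swap 0 (Fin.last (m + 1)) := by
  induction m with
  | zero => rfl
  | succ m ih =>
    have hs : adjTransposition (m + 2) 0 = Equiv.swap 0 1 := rfl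
    have hlast : Equiv.swap (0 : Fin (m + 3)) 1 (Fin.last (m + 2)) = Fin.last (m + 2) :=
      Equiv.swap_apply_of_ne_of_ne (by simp [Fin.ext_iff]) (by simp [Fin.ext_iff])
    have hconj := Equiv.swap_apply_apply (Equiv.swap (0 : Fin (m + 3)) 1) 1 (Fin.last (m + 2))
    rw [Equiv.swap_apply_right, hlast, Equiv.swap_inv] at hconj
    rw [topWordA_succ_succ, List.cons_append, wordProdA_cons, wordProdA_append,
      wordProdA_map_succ, ih, succPerm_swap, Fin.succ_last, wordProdA_singleton, hs, ← mul_assoc]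
    exact hconj.symm

lemma reducedA_topWordA (m : ℕ) : ReducedA (m + 1) (topWordA (m + 1)) := by
  intro w hw
  have hinv := card_inversions_wordProdA_le w
  rw [hw, wordProdA_topWordA] at hinv
  have := card_inversions_swap_zero_last (n := m + 1)
  simp only [topWordA, List.length_append, List.length_reverse, List.length_dropLast,
    List.length_finRange]
  omega

lemma IsBooleanA.of_sublist_topWordA {m : ℕ} {w : List (Fin (m + 1))}
    (hw : w.Sublist (topWordA (m + 1))) : IsBooleanA (m + 1) (wordProdA (m + 1) w) := by
  have hne : List.finRange (m + 1) ≠ [] := by simp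
  have htop : topWordA (m + 1) = (List.finRange (m + 1)).dropLast ++
      [(List.finRange (m + 1)).getLast hne] ++ ((List.finRange (m + 1)).dropLast).reverse := by
    rw [List.dropLast_append_getLast hne]
    rfl
  refine ⟨_, _, ?_, htop ▸ reducedA_topWordA m, w, htop ▸ hw, rfl⟩
  rw [List.dropLast_append_getLast hne]
  exact List.nodup_finRange _

lemma wordProdA_mul_self_of_sublist_singleton {e : List (Fin n)} {a : Fin n}
    (he : e.Sublist [a]) : wordProdA n e * wordProdA n e = 1 := by
  rcases List.sublist_singleton.1 he with rfl | rfl <;> simp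

lemma exists_mul_mul_apply_zero_eq_zero {m : ℕ} (π : Equiv.Perm (Fin (m + 2)))
    (h : escapeCount π 2 ≤ 1) : ∃ e₁ e₂ : List (Fin (m + 1)), e₁.Sublist [0] ∧ e₂.Sublist [0] ∧
      (wordProdA (m + 1) e₁ * π * wordProdA (m + 1) e₂) 0 = 0 := by
  have hs₀ : adjTransposition (m + 1) 0 0 = 1 := Equiv.swap_apply_left _ _
  have hs₁ : adjTransposition (m + 1) 0 1 = 0 := Equiv.swap_apply_right _ _
  by_cases h₀ : π 0 = 0
  · exact ⟨[], [], List.nil_sublist _, List.nil_sublist _, by simpa using h₀⟩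
  by_cases h₁ : π 1 = 0
  · exact ⟨[], [0], List.nil_sublist _, List.Sublist.refl _, by simp [hs₀, h₁]⟩
  by_cases h₀₁ : π 0 = 1
  · exact ⟨[0], [], List.Sublist.refl _, List.nil_sublist _, by simp [h₀₁, hs₁]⟩
  -- now `π 0 ≥ 2`, so a single crossing of the cut `2` forces `π 1 = 1`
  have h₁₁ : π 1 = 1 := by
    by_contra h₁₁
    have hsub : ({0, 1} : Finset (Fin (m + 2))) ⊆
        univ.filter fun x => x.val < 2 ∧ 2 ≤ (π x).val := by
      simp only [Fin.ext_iff, Fin.val_zero, Fin.val_one] at h₀ h₁ h₀₁ h₁₁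
      intro x hx
      rw [mem_insert, mem_singleton] at hx
      rcases hx with rfl | rfl <;>
        simp only [mem_filter, mem_univ, true_and, Fin.val_zero, Fin.val_one] <;> omega
    have := (card_le_card hsub).trans h
    rw [card_pair (by simp)] at this
    omega
  exact ⟨[0], [0], List.Sublist.refl _, List.Sublist.refl _, by simp [hs₀, h₁₁, hs₁]⟩

lemma exists_sublist_topWordA : ∀ (m : ℕ) (π : Equiv.Perm (Fin (m + 2))),
    (∀ i, 1 ≤ i → i ≤ m + 1 → escapeCount π i ≤ 1) →
      ∃ w, w.Sublist (topWordA (m + 1)) ∧ wordProdA (m + 1) w = π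
  | 0, π, _ => by
    rcases (by decide : ∀ π : Equiv.Perm (Fin 2), π = 1 ∨ π = Equiv.swap 0 1) π with rfl | rfl
    · exact ⟨[], List.nil_sublist _, rfl⟩
    · exact ⟨[0], List.Sublist.refl _, rfl⟩
  | m + 1, π, h => by
    obtain ⟨e₁, e₂, he₁, he₂, h0⟩ :=
      exists_mul_mul_apply_zero_eq_zero π (h 2 (by omega) (by omega))
    obtain ⟨σ, hσ⟩ := exists_succPerm_eq h0
    have hpreserve {e : List (Fin (m + 2))} (he : e.Sublist [0]) {i : ℕ} (hi : 2 ≤ i) :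
        ∀ x, (wordProdA (m + 2) e x).val < i ↔ x.val < i :=
      wordProdA_apply_val_lt_iff fun b hb => by
        rw [List.mem_singleton.1 (he.subset hb), Fin.val_zero]
        omega
    obtain ⟨w, hw, hwσ⟩ := exists_sublist_topWordA m σ fun i hi₁ hi₂ => by
      rw [← escapeCount_succPerm, hσ, escapeCount_mul_right (hpreserve he₂ (by omega)),
        escapeCount_mul_left (hpreserve he₁ (by omega))]
      exact h (i + 1) (by omega) (by omega)
    refine ⟨e₁ ++ w.map Fin.succ ++ e₂, ?_, ?_⟩
    · rw [topWordA_succ_succ]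
      exact (he₁.append (hw.map _)).append he₂
    · rw [wordProdA_append, wordProdA_append, wordProdA_map_succ, hwσ, hσ, ← mul_assoc,
        ← mul_assoc, wordProdA_mul_self_of_sublist_singleton he₁, one_mul, mul_assoc,
        wordProdA_mul_self_of_sublist_singleton he₂, mul_one]

theorem stmt3 (n : ℕ) (hn : 1 ≤ n) (π : Equiv.Perm (Fin (n + 1))) :
    IsBooleanA n π ↔
      ∀ i : ℕ, 1 ≤ i → i ≤ n →
        i - 1 ≤
          ((Finset.univ.filter (fun x : Fin (n + 1) => x.val < i)).image (fun x => π x) ∩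
            Finset.univ.filter (fun x : Fin (n + 1) => x.val < i)).card := by
  have hcond (i : ℕ) (hi : i ≤ n) := le_card_image_inter_iff π (i := i) (by omega)
  refine ⟨fun h i _ hi => (hcond i hi).2 (h.escapeCount_le_one i), fun h => ?_⟩
  obtain ⟨m, rfl⟩ : ∃ m, n = m + 1 := ⟨n - 1, by omega⟩
  obtain ⟨w, hw, rfl⟩ :=
    exists_sublist_topWordA m π fun i hi₁ hi₂ => (hcond i hi₂).1 (h i hi₁ hi₂)
  exact IsBooleanA.of_sublist_topWordA hw
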